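/- arXiv:2101.08519 — 3 statements merged into one kernel-verified Lean document; each statement's English description precedes it below -/
import Mathlib

section
/- Let f : ℝ^n → ℝ be lower semicontinuous and ρ-weakly convex, let γ ∈ (0, 1/ρ), and suppose f has the implicit bounded subgradient property with constant L̂_f > 0. Let sequences (x^k)_{k≥1} in ℝ^n, (z^k)_{k≥0} in ℝ^n, (λ^k)_{k≥0} in ℝ^m, vectors s^k ∈ ℝ^n with ‖s^k‖ ≤ ε_k (ε_k ≥ 0), and penalty parameters β_k > 0 satisfy, for every k ≥ 0: x^{k+1} = Prox_{γ,f}(z^k − γ(Aᵀλ^{k+1} − s^k)) and λ^{k+1} = λ^k + β_k(Ax^{k+1} − b). Assume b lies in the column space of A and σ̃ > 0 satisfies ‖Aᵀv‖² ≥ σ̃‖v‖² for every v in the column space of A, and set c_{γ,A} := γ²σ̃. Then for every k ≥ 1: ‖λ^{k+1} − λ^k‖² ≤ 4 c_{γ,A}⁻¹ [ 4γ²L̂_f² + ‖x^{k+1} − x^k‖² + ‖z^k − z^{k−1}‖² + γ²(ε_k + ε_{k−1})² ]. -/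
/-! The prox step says `x^{k+1} = w^k - γ ∇M(w^k)` with `w^k = z^k - γ (Aᵀλ^{k+1} - s^k)`,
so `γ Aᵀλ^{k+1}` is `z^k - x^{k+1} + γ s^k` up to a residual of norm at most `γ L̂_f`.
Subtracting two consecutive instances bounds `γ ‖Aᵀ(λ^{k+1} - λ^k)‖`, and since
`λ^{k+1} - λ^k = β_k (A x^{k+1} - b)` lies in the range of `A`, the constant `σ̃` turns this
into a bound on `‖λ^{k+1} - λ^k‖`. -/

lemma norm_le_mul_of_norm_inv_smul_le {E : Type*} [NormedAddCommGroup E] [NormedSpace ℝ E]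
    {γ L : ℝ} (hγ : 0 < γ) {v : E} (h : ‖γ⁻¹ • v‖ ≤ L) : ‖v‖ ≤ γ * L := by
  rw [norm_smul, norm_inv, Real.norm_of_nonneg hγ.le] at h
  exact (inv_mul_le_iff₀ hγ).1 h

lemma mul_norm_sub_le_of_residual {E : Type*} [NormedAddCommGroup E] [NormedSpace ℝ E]
    {γ L e₀ e₁ : ℝ} (hγ : 0 < γ) {z₀ z₁ x₀ x₁ y₀ y₁ s₀ s₁ : E}
    (h₀ : ‖z₀ - γ • (y₀ - s₀) - x₀‖ ≤ γ * L) (h₁ : ‖z₁ - γ • (y₁ - s₁) - x₁‖ ≤ γ * L)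
    (hs₀ : ‖s₀‖ ≤ e₀) (hs₁ : ‖s₁‖ ≤ e₁) :
    γ * ‖y₁ - y₀‖ ≤ ‖z₁ - z₀‖ + ‖x₁ - x₀‖ + γ * (e₁ + e₀) + 2 * (γ * L) := by
  set r₀ := z₀ - γ • (y₀ - s₀) - x₀
  set r₁ := z₁ - γ • (y₁ - s₁) - x₁
  have hdecomp : γ • (y₁ - y₀) = (z₁ - z₀) - (x₁ - x₀) + γ • (s₁ - s₀) - (r₁ - r₀) := by
    simp only [r₀, r₁]
    module
  have hs : ‖γ • (s₁ - s₀)‖ ≤ γ * (e₁ + e₀) := by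
    rw [norm_smul, Real.norm_of_nonneg hγ.le]
    gcongr
    exact (norm_sub_le _ _).trans (add_le_add hs₁ hs₀)
  calc γ * ‖y₁ - y₀‖ = ‖γ • (y₁ - y₀)‖ := by rw [norm_smul, Real.norm_of_nonneg hγ.le]
    _ ≤ _ := by
      rw [hdecomp]
      linarith [norm_sub_le ((z₁ - z₀) - (x₁ - x₀) + γ • (s₁ - s₀)) (r₁ - r₀),
        norm_add_le ((z₁ - z₀) - (x₁ - x₀)) (γ • (s₁ - s₀)),
        norm_sub_le (z₁ - z₀) (x₁ - x₀), norm_sub_le r₁ r₀]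

lemma add_add_add_sq_le (a b c d : ℝ) :
    (a + b + c + d) ^ 2 ≤ 4 * (a ^ 2 + b ^ 2 + c ^ 2 + d ^ 2) := by
  nlinarith [sq_nonneg (a - b), sq_nonneg (a - c), sq_nonneg (a - d),
    sq_nonneg (b - c), sq_nonneg (b - d), sq_nonneg (c - d)]

theorem stmt_5_general (n m : ℕ) (A : Matrix (Fin m) (Fin n) ℝ) (b : EuclideanSpace ℝ (Fin m))
    (γ Lfhat : ℝ)
    (hγ0 : 0 < γ)
    (prox : EuclideanSpace ℝ (Fin n) → EuclideanSpace ℝ (Fin n))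
    (hbnd : ∀ w, ‖γ⁻¹ • (w - prox w)‖ ≤ Lfhat)
    (x z : ℕ → EuclideanSpace ℝ (Fin n)) (lam : ℕ → EuclideanSpace ℝ (Fin m))
    (s : ℕ → EuclideanSpace ℝ (Fin n)) (ε : ℕ → ℝ)
    (hs : ∀ k, ‖s k‖ ≤ ε k)
    (β : ℕ → ℝ)
    (hx : ∀ k, x (k + 1)
        = prox (z k - γ • (Matrix.toEuclideanLin A.transpose (lam (k + 1)) - s k)))
    (hlam : ∀ k, lam (k + 1) = lam k + β k • (Matrix.toEuclideanLin A (x (k + 1)) - b))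
    (σ : ℝ) (hσ : 0 < σ)
    (hb : b ∈ LinearMap.range (Matrix.toEuclideanLin A))
    (hσA : ∀ v ∈ LinearMap.range (Matrix.toEuclideanLin A),
      σ * ‖v‖ ^ 2 ≤ ‖Matrix.toEuclideanLin A.transpose v‖ ^ 2) :
    ∀ k, 1 ≤ k →
      ‖lam (k + 1) - lam k‖ ^ 2
        ≤ 4 * (γ ^ 2 * σ)⁻¹ * (4 * γ ^ 2 * Lfhat ^ 2 + ‖x (k + 1) - x k‖ ^ 2
            + ‖z k - z (k - 1)‖ ^ 2 + γ ^ 2 * (ε k + ε (k - 1)) ^ 2) := by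
  intro k hk
  obtain ⟨j, rfl⟩ := Nat.exists_eq_add_of_le' hk
  rw [Nat.add_sub_cancel]
  set B := Matrix.toEuclideanLin A.transpose
  have hres (i : ℕ) : ‖z i - γ • (B (lam (i + 1)) - s i) - x (i + 1)‖ ≤ γ * Lfhat := by
    rw [hx i]
    exact norm_le_mul_of_norm_inv_smul_le hγ0 (hbnd _)
  have hmem : lam (j + 1 + 1) - lam (j + 1) ∈ LinearMap.range (Matrix.toEuclideanLin A) := by
    rw [hlam, add_sub_cancel_left]
    exact Submodule.smul_mem _ _ (Submodule.sub_mem _ (LinearMap.mem_range_self _ _) hb)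
  have hdual : γ * ‖B (lam (j + 1 + 1) - lam (j + 1))‖
      ≤ ‖z (j + 1) - z j‖ + ‖x (j + 1 + 1) - x (j + 1)‖ + γ * (ε (j + 1) + ε j)
        + 2 * (γ * Lfhat) := by
    rw [map_sub]
    exact mul_norm_sub_le_of_residual hγ0 (hres j) (hres (j + 1)) (hs j) (hs (j + 1))
  calc ‖lam (j + 1 + 1) - lam (j + 1)‖ ^ 2
      ≤ (γ ^ 2 * σ)⁻¹ * (γ * ‖B (lam (j + 1 + 1) - lam (j + 1))‖) ^ 2 := by
        rw [le_inv_mul_iff₀ (by positivity), mul_pow, mul_assoc]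
        gcongr
        exact hσA _ hmem
    _ ≤ (γ ^ 2 * σ)⁻¹ * (‖z (j + 1) - z j‖ + ‖x (j + 1 + 1) - x (j + 1)‖
          + γ * (ε (j + 1) + ε j) + 2 * (γ * Lfhat)) ^ 2 := by
        gcongr
    _ ≤ (γ ^ 2 * σ)⁻¹ * (4 * (‖z (j + 1) - z j‖ ^ 2 + ‖x (j + 1 + 1) - x (j + 1)‖ ^ 2
          + (γ * (ε (j + 1) + ε j)) ^ 2 + (2 * (γ * Lfhat)) ^ 2)) := by
        gcongr
        exact add_add_add_sq_le _ _ _ _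
    _ = _ := by ring

/-- Lemma 5(b) (iMEAL: controlling dual by primal, implicit bounded subgradient case). -/
theorem stmt_5 (n m : ℕ) (A : Matrix (Fin m) (Fin n) ℝ) (b : EuclideanSpace ℝ (Fin m))
    (f : EuclideanSpace ℝ (Fin n) → ℝ) (ρ γ Lfhat : ℝ)
    (hρ : 0 < ρ) (hγ0 : 0 < γ) (hγ : γ < 1 / ρ) (hLf : 0 < Lfhat)
    (hlsc : LowerSemicontinuous f)
    (hwc : ConvexOn ℝ Set.univ fun x => f x + ρ / 2 * ‖x‖ ^ 2)
    (prox : EuclideanSpace ℝ (Fin n) → EuclideanSpace ℝ (Fin n))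
    (hproxmin : ∀ w x, f (prox w) + 1 / (2 * γ) * ‖prox w - w‖ ^ 2
        ≤ f x + 1 / (2 * γ) * ‖x - w‖ ^ 2)
    (hproxuniq : ∀ w x, (∀ y, f x + 1 / (2 * γ) * ‖x - w‖ ^ 2
        ≤ f y + 1 / (2 * γ) * ‖y - w‖ ^ 2) → x = prox w)
    (hbnd : ∀ w, ‖γ⁻¹ • (w - prox w)‖ ≤ Lfhat)
    (x z : ℕ → EuclideanSpace ℝ (Fin n)) (lam : ℕ → EuclideanSpace ℝ (Fin m))
    (s : ℕ → EuclideanSpace ℝ (Fin n)) (ε : ℕ → ℝ)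
    (hε : ∀ k, 0 ≤ ε k) (hs : ∀ k, ‖s k‖ ≤ ε k)
    (β : ℕ → ℝ) (hβ : ∀ k, 0 < β k)
    (hx : ∀ k, x (k + 1)
        = prox (z k - γ • (Matrix.toEuclideanLin A.transpose (lam (k + 1)) - s k)))
    (hlam : ∀ k, lam (k + 1) = lam k + β k • (Matrix.toEuclideanLin A (x (k + 1)) - b))
    (σ : ℝ) (hσ : 0 < σ)
    (hb : b ∈ LinearMap.range (Matrix.toEuclideanLin A))
    (hσA : ∀ v ∈ LinearMap.range (Matrix.toEuclideanLin A),
      σ * ‖v‖ ^ 2 ≤ ‖Matrix.toEuclideanLin A.transpose v‖ ^ 2) :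
    ∀ k, 1 ≤ k →
      ‖lam (k + 1) - lam k‖ ^ 2
        ≤ 4 * (γ ^ 2 * σ)⁻¹ * (4 * γ ^ 2 * Lfhat ^ 2 + ‖x (k + 1) - x k‖ ^ 2
            + ‖z k - z (k - 1)‖ ^ 2 + γ ^ 2 * (ε k + ε (k - 1)) ^ 2) :=
  stmt_5_general n m A b γ Lfhat hγ0 prox hbnd x z lam s ε hs β hx hlam σ hσ hb hσA
end

section
/- Let f : ℝ^n → ℝ be lower semicontinuous and ρ-weakly convex with the implicit Lipschitz subgradient property with constant L_f > 0, let γ ∈ (0, 1/ρ), η ∈ (0, 2), and let β > 0 be a fixed penalty parameter. Assume b lies in the column space of A and σ̃ > 0 satisfies ‖Aᵀv‖² ≥ σ̃‖v‖² for every v in the column space of A; set c_{γ,A} := γ²σ̃ and α := (2β + γη(1 − η/2))/(2c_{γ,A}β²), and assume α < min{ (1 − γρ)/(4γ(1 + γL_f)²), (1/(8γ))(2/η − 1) }. Let (x^k, z^k, λ^k) be MEAL iterates with constant penalty β_k = β and step size η, and suppose the sequence E^k := P_β(x^k, z^k, λ^k) + 2α‖z^k − z^{k−1}‖² (k ≥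 1) is bounded below. Then √k · (min_{1≤t≤k} Φ_t) → 0 as k → ∞, where Φ_t := √((ηγ)⁻²‖z^t − z^{t+1}‖² + β⁻²‖λ^{t+1} − λ^t‖²). -/
/-!
`E^k = P_β(x^k, z^k, λ^k) + 2α‖z^k − z^{k−1}‖²` is a Lyapunov function for MEAL. The
`x`-subproblem is `(1/γ − ρ)`-strongly convex, so its minimizer gains `(1/(2γ) − ρ/2)‖Δx‖²`;
the relaxation of `z` and the multiplier step change `P_β` by explicit squares; and since
`x^{k+1} = Prox(w^k)` with `w^k = z^k − γAᵀλ^{k+1}`, the implicit Lipschitz property and `σ̃`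
bound `‖Δλ‖` by `‖Δz‖` and `‖Δx‖`. The condition on `α` makes every coefficient of the
resulting sufficient-decrease inequality positive, so `Φ_t²` is summable, and for a summable
sequence `k · min_{k/2 < t ≤ k} Φ_t² ≤ 2 ∑_{t > k/2} Φ_t² → 0`.
-/

open scoped RealInnerProductSpace

/-- `P_β(x, z, λ) = f(x) + ⟨λ, Ax − b⟩ + (β/2)‖Ax − b‖² + (1/(2γ))‖x − z‖²`. -/
noncomputable def Pfun {n m : ℕ} (f : EuclideanSpace ℝ (Fin n) → ℝ)
    (A : Matrix (Fin m) (Fin n) ℝ) (b : EuclideanSpace ℝ (Fin m)) (γ β : ℝ)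
    (x z : EuclideanSpace ℝ (Fin n)) (lam : EuclideanSpace ℝ (Fin m)) : ℝ :=
  f x + ⟪lam, Matrix.toEuclideanLin A x - b⟫
    + β / 2 * ‖Matrix.toEuclideanLin A x - b‖ ^ 2 + 1 / (2 * γ) * ‖x - z‖ ^ 2

open Filter Topology Set

theorem StrongConvexOn.add_sq_norm_sub_le_of_isMinOn {E : Type*} [NormedAddCommGroup E]
    [NormedSpace ℝ E] {g : E → ℝ} {μ : ℝ} {x₀ : E} (hg : StrongConvexOn univ μ g)
    (hmin : IsMinOn g univ x₀) (x : E) : g x₀ + μ / 2 * ‖x - x₀‖ ^ 2 ≤ g x := by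
  have hseg : ∀ t ∈ Ioo (0 : ℝ) 1, g x₀ + (1 - t) * (μ / 2 * ‖x - x₀‖ ^ 2) ≤ g x := by
    rintro t ⟨ht0, ht1⟩
    have hconv := hg.2 (mem_univ x) (mem_univ x₀) ht0.le (sub_nonneg.2 ht1.le) (by ring)
    have hle := isMinOn_univ_iff.1 hmin (t • x + (1 - t) • x₀)
    simp only [smul_eq_mul] at hconv
    refine le_of_mul_le_mul_left ?_ ht0
    linarith
  have hlim : Tendsto (fun t : ℝ => g x₀ + (1 - t) * (μ / 2 * ‖x - x₀‖ ^ 2)) (𝓝[>] 0)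
      (𝓝 (g x₀ + μ / 2 * ‖x - x₀‖ ^ 2)) :=
    tendsto_nhdsWithin_of_tendsto_nhds ((by fun_prop : Continuous fun t : ℝ =>
      g x₀ + (1 - t) * (μ / 2 * ‖x - x₀‖ ^ 2)).tendsto' 0 _ (by simp))
  exact le_of_tendsto hlim (mem_of_superset (Ioo_mem_nhdsGT one_pos) hseg)

section MEAL

variable {n m : ℕ} {A : Matrix (Fin m) (Fin n) ℝ} {b : EuclideanSpace ℝ (Fin m)}
  {f : EuclideanSpace ℝ (Fin n) → ℝ} {ρ γ β : ℝ}

theorem strongConvexOn_Pfun (hβ : 0 ≤ β)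
    (hwc : ConvexOn ℝ univ fun x => f x + ρ / 2 * ‖x‖ ^ 2)
    (z : EuclideanSpace ℝ (Fin n)) (lam : EuclideanSpace ℝ (Fin m)) :
    StrongConvexOn univ (1 / γ - ρ) fun x => Pfun f A b γ β x z lam := by
  set T := Matrix.toEuclideanLin A
  have hres : ConvexOn ℝ univ fun x => ‖T x - b‖ ^ 2 := by
    exact ((convexOn_norm convex_univ).pow (fun _ _ => norm_nonneg _) 2).comp_affineMap
      (T.toAffineMap - AffineMap.const ℝ _ b)
  have hlin : ConvexOn ℝ univ ((innerₛₗ ℝ lam).comp T - (1 / γ) • innerₛₗ ℝ z) :=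
    LinearMap.convexOn _ convex_univ
  rw [strongConvexOn_iff_convex]
  refine (((hwc.add (hres.smul (by positivity : 0 ≤ β / 2))).add hlin).add_const
    (-⟪lam, b⟫ + 1 / (2 * γ) * ‖z‖ ^ 2)).congr fun x _ => ?_
  simp only [Pfun, T, Pi.add_apply, LinearMap.sub_apply, LinearMap.coe_comp, Function.comp_apply,
    LinearMap.smul_apply, coe_innerₛₗ_apply, innerₛₗ_apply_apply, smul_eq_mul, norm_sub_sq_real,
    inner_sub_right, real_inner_comm]
  ring

theorem Pfun_relax_add {η : ℝ} (x z : EuclideanSpace ℝ (Fin n))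
    (lam : EuclideanSpace ℝ (Fin m)) :
    Pfun f A b γ β x (z - η • (z - x)) lam + (2 - η) / (2 * γ * η) * ‖z - η • (z - x) - z‖ ^ 2
      = Pfun f A b γ β x z lam := by
  have h₁ : x - (z - η • (z - x)) = (1 - η) • (x - z) := by module
  have h₂ : z - η • (z - x) - z = η • (x - z) := by module
  simp only [Pfun, h₁, h₂, norm_smul, mul_pow, Real.norm_eq_abs, sq_abs]
  field_simp
  ring

theorem Pfun_multiplier_update (x z : EuclideanSpace ℝ (Fin n)) (lam : EuclideanSpace ℝ (Fin m)) :
    Pfun f A b γ β x z (lam + β • (Matrix.toEuclideanLin A x - b))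
      = Pfun f A b γ β x z lam + β * ‖Matrix.toEuclideanLin A x - b‖ ^ 2 := by
  simp only [Pfun, inner_add_left, real_inner_smul_left, real_inner_self_eq_norm_sq]
  ring

theorem norm_sub_le_of_moreau_grad_lipschitz {E : Type*} [NormedAddCommGroup E]
    [NormedSpace ℝ E] {prox : E → E} {L : ℝ} (hγ : 0 < γ)
    (hlip : ∀ w w', ‖γ⁻¹ • (w - prox w) - γ⁻¹ • (w' - prox w')‖ ≤ L * ‖prox w - prox w'‖)
    (w w' : E) : ‖w - w'‖ ≤ (1 + γ * L) * ‖prox w - prox w'‖ := by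
  have hsplit : w - w' = (prox w - prox w')
      + γ • (γ⁻¹ • (w - prox w) - γ⁻¹ • (w' - prox w')) := by
    rw [smul_sub, smul_inv_smul₀ hγ.ne', smul_inv_smul₀ hγ.ne']
    abel
  calc ‖w - w'‖ ≤ ‖prox w - prox w'‖ + γ * (L * ‖prox w - prox w'‖) := by
        rw [hsplit]
        refine (norm_add_le _ _).trans ?_
        rw [norm_smul, Real.norm_of_nonneg hγ.le]
        gcongr
        exact hlip w w'
    _ = (1 + γ * L) * ‖prox w - prox w'‖ := by ring

variable {prox : EuclideanSpace ℝ (Fin n) → EuclideanSpace ℝ (Fin n)} {η σ Lf : ℝ}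
  {x z : ℕ → EuclideanSpace ℝ (Fin n)} {lam : ℕ → EuclideanSpace ℝ (Fin m)}

theorem meal_multiplier_step_le (hγ : 0 < γ)
    (hlip : ∀ w w', ‖γ⁻¹ • (w - prox w) - γ⁻¹ • (w' - prox w')‖ ≤ Lf * ‖prox w - prox w'‖)
    (hb : b ∈ LinearMap.range (Matrix.toEuclideanLin A))
    (hσA : ∀ v ∈ LinearMap.range (Matrix.toEuclideanLin A),
      σ * ‖v‖ ^ 2 ≤ ‖Matrix.toEuclideanLin A.transpose v‖ ^ 2)
    (hlam : ∀ k, lam (k + 1) = lam k + β • (Matrix.toEuclideanLin A (x (k + 1)) - b))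
    (hprox : ∀ k, x (k + 1) = prox (z k - γ • Matrix.toEuclideanLin A.transpose (lam (k + 1))))
    (k : ℕ) :
    γ ^ 2 * σ * ‖lam (k + 2) - lam (k + 1)‖ ^ 2
      ≤ 2 * ‖z (k + 1) - z k‖ ^ 2 + 2 * (1 + γ * Lf) ^ 2 * ‖x (k + 2) - x (k + 1)‖ ^ 2 := by
  set T := Matrix.toEuclideanLin A
  set Tt := Matrix.toEuclideanLin A.transpose
  set w := fun k => z k - γ • Tt (lam (k + 1))
  have hΔlam : lam (k + 2) - lam (k + 1) = β • (T (x (k + 2)) - b) := by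
    rw [hlam (k + 1)]; abel
  have hrange : lam (k + 2) - lam (k + 1) ∈ LinearMap.range T := by
    obtain ⟨u, hu⟩ := hb
    exact ⟨β • (x (k + 2) - u), by rw [hΔlam, map_smul, map_sub, hu]⟩
  have hsplit : γ • Tt (lam (k + 2) - lam (k + 1)) = (z (k + 1) - z k) - (w (k + 1) - w k) := by
    simp only [w, map_sub]; module
  have hw : ‖w (k + 1) - w k‖ ≤ (1 + γ * Lf) * ‖x (k + 2) - x (k + 1)‖ := by
    rw [hprox (k + 1), hprox k]
    exact norm_sub_le_of_moreau_grad_lipschitz hγ hlip _ _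
  have hnorm : γ * ‖Tt (lam (k + 2) - lam (k + 1))‖
      ≤ ‖z (k + 1) - z k‖ + (1 + γ * Lf) * ‖x (k + 2) - x (k + 1)‖ := by
    calc γ * ‖Tt (lam (k + 2) - lam (k + 1))‖ = ‖γ • Tt (lam (k + 2) - lam (k + 1))‖ := by
          rw [norm_smul, Real.norm_of_nonneg hγ.le]
      _ ≤ ‖z (k + 1) - z k‖ + ‖w (k + 1) - w k‖ := hsplit ▸ norm_sub_le _ _
      _ ≤ _ := by linarith
  calc γ ^ 2 * σ * ‖lam (k + 2) - lam (k + 1)‖ ^ 2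
      ≤ γ ^ 2 * ‖Tt (lam (k + 2) - lam (k + 1))‖ ^ 2 := by
        rw [mul_assoc]; exact mul_le_mul_of_nonneg_left (hσA _ hrange) (sq_nonneg γ)
    _ = (γ * ‖Tt (lam (k + 2) - lam (k + 1))‖) ^ 2 := by ring
    _ ≤ (‖z (k + 1) - z k‖ + (1 + γ * Lf) * ‖x (k + 2) - x (k + 1)‖) ^ 2 := by gcongr
    _ ≤ _ := by nlinarith [sq_nonneg (‖z (k + 1) - z k‖ - (1 + γ * Lf) * ‖x (k + 2) - x (k + 1)‖)]

theorem meal_descent (hγ : 0 < γ) (hβ : 0 < β) (hσ : 0 < σ)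
    (hwc : ConvexOn ℝ univ fun x => f x + ρ / 2 * ‖x‖ ^ 2)
    (hlip : ∀ w w', ‖γ⁻¹ • (w - prox w) - γ⁻¹ • (w' - prox w')‖ ≤ Lf * ‖prox w - prox w'‖)
    (hb : b ∈ LinearMap.range (Matrix.toEuclideanLin A))
    (hσA : ∀ v ∈ LinearMap.range (Matrix.toEuclideanLin A),
      σ * ‖v‖ ^ 2 ≤ ‖Matrix.toEuclideanLin A.transpose v‖ ^ 2)
    (hxmin : ∀ k x', Pfun f A b γ β (x (k + 1)) (z k) (lam k)
        ≤ Pfun f A b γ β x' (z k) (lam k))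
    (hz : ∀ k, z (k + 1) = z k - η • (z k - x (k + 1)))
    (hlam : ∀ k, lam (k + 1) = lam k + β • (Matrix.toEuclideanLin A (x (k + 1)) - b))
    (hprox : ∀ k, x (k + 1) = prox (z k - γ • Matrix.toEuclideanLin A.transpose (lam (k + 1))))
    (k : ℕ) :
    Pfun f A b γ β (x (k + 2)) (z (k + 2)) (lam (k + 2))
        + (2 - η) / (2 * γ * η) * ‖z (k + 2) - z (k + 1)‖ ^ 2
        + (1 / (2 * γ) - ρ / 2 - 2 * (1 + γ * Lf) ^ 2 / (γ ^ 2 * σ * β))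
          * ‖x (k + 2) - x (k + 1)‖ ^ 2
      ≤ Pfun f A b γ β (x (k + 1)) (z (k + 1)) (lam (k + 1))
        + 2 / (γ ^ 2 * σ * β) * ‖z (k + 1) - z k‖ ^ 2 := by
  set T := Matrix.toEuclideanLin A
  have hrelax := Pfun_relax_add (f := f) (A := A) (b := b) (γ := γ) (β := β) (η := η)
    (x (k + 2)) (z (k + 1)) (lam (k + 2))
  rw [← hz (k + 1)] at hrelax
  have hascent := Pfun_multiplier_update (f := f) (A := A) (b := b) (γ := γ) (β := β)
    (x (k + 2)) (z (k + 1)) (lam (k + 1))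
  rw [← hlam (k + 1)] at hascent
  have hgrowth :=
    (strongConvexOn_Pfun hβ.le hwc (z (k + 1)) (lam (k + 1))).add_sq_norm_sub_le_of_isMinOn
    (isMinOn_univ_iff.2 (hxmin (k + 1))) (x (k + 1))
  have hdual := meal_multiplier_step_le hγ hlip hb hσA hlam hprox k
  have hΔlam : ‖lam (k + 2) - lam (k + 1)‖ ^ 2 = β ^ 2 * ‖T (x (k + 2)) - b‖ ^ 2 := by
    rw [hlam (k + 1), add_sub_cancel_left, norm_smul, mul_pow, Real.norm_eq_abs, sq_abs]
  have hresidual : β * ‖T (x (k + 2)) - b‖ ^ 2 ≤ 2 / (γ ^ 2 * σ * β) * ‖z (k + 1) - z k‖ ^ 2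
      + 2 * (1 + γ * Lf) ^ 2 / (γ ^ 2 * σ * β) * ‖x (k + 2) - x (k + 1)‖ ^ 2 := by
    rw [div_mul_eq_mul_div, div_mul_eq_mul_div, ← add_div, le_div_iff₀ (by positivity)]
    rw [hΔlam] at hdual
    linear_combination hdual
  rw [show k + 1 + 1 = k + 2 from rfl] at hrelax hascent hgrowth
  rw [norm_sub_rev] at hgrowth
  linear_combination hrelax + hascent + hgrowth + hresidual

theorem meal_descent_coeffs_pos (hγ : 0 < γ) (hη0 : 0 < η) (hη2 : η < 2) (hLf : 0 < Lf) (hβ : 0 < β)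
    (hσ : 0 < σ) {α : ℝ}
    (hαdef : α = (2 * β + γ * η * (1 - η / 2)) / (2 * (γ ^ 2 * σ) * β ^ 2))
    (hα : α < min ((1 - γ * ρ) / (4 * γ * (1 + γ * Lf) ^ 2)) (1 / (8 * γ) * (2 / η - 1))) :
    2 / (γ ^ 2 * σ * β) ≤ 2 * α ∧ 0 < (2 - η) / (2 * γ * η) - 2 * α
      ∧ 0 < 1 / (2 * γ) - ρ / 2 - 2 * (1 + γ * Lf) ^ 2 / (γ ^ 2 * σ * β) := by
  obtain ⟨hαρ, hαη⟩ := lt_min_iff.1 hα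
  have hLb : 0 < 1 + γ * Lf := by positivity
  have hlow : 1 / (γ ^ 2 * σ * β) ≤ α := by
    rw [hαdef, div_le_div_iff₀ (by positivity) (by positivity)]
    nlinarith [mul_pos (mul_pos hγ hη0) (sub_pos.2 hη2), mul_pos (mul_pos hγ hγ) (mul_pos hσ hβ)]
  have hα0 : 0 < α := lt_of_lt_of_le (by positivity) hlow
  refine ⟨by rw [show 2 / (γ ^ 2 * σ * β) = 2 * (1 / (γ ^ 2 * σ * β)) by ring]; linarith, ?_, ?_⟩
  · have : (2 - η) / (2 * γ * η) = 4 * (1 / (8 * γ) * (2 / η - 1)) := by field_simp; ring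
    linarith
  · rw [lt_div_iff₀ (by positivity)] at hαρ
    have h₁ : 2 * (1 + γ * Lf) ^ 2 / (γ ^ 2 * σ * β) ≤ 2 * (1 + γ * Lf) ^ 2 * α :=
      calc 2 * (1 + γ * Lf) ^ 2 / (γ ^ 2 * σ * β)
          = 2 * (1 + γ * Lf) ^ 2 * (1 / (γ ^ 2 * σ * β)) := by ring
        _ ≤ 2 * (1 + γ * Lf) ^ 2 * α := by gcongr
    have h₂ : 2 * (1 + γ * Lf) ^ 2 * α < 1 / (2 * γ) - ρ / 2 := by
      rw [show 1 / (2 * γ) - ρ / 2 = (1 - γ * ρ) / (2 * γ) by field_simp,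
        lt_div_iff₀ (by positivity)]
      linarith
    linarith

theorem summable_of_add_le_of_forall_le {F g : ℕ → ℝ} {B : ℝ} (hB : ∀ k, B ≤ F k)
    (hg : ∀ k, 0 ≤ g k) (hFg : ∀ k, F (k + 1) + g k ≤ F k) : Summable g := by
  refine summable_of_sum_range_le (c := F 0 - B) hg fun N => ?_
  have htel : ∑ i ∈ Finset.range N, g i ≤ F 0 - F N := by
    induction N with
    | zero => simp
    | succ N ih => rw [Finset.sum_range_succ]; linarith [hFg N]
  linarith [hB N]

theorem tendsto_sqrt_mul_sInf_image_Icc_of_summable_sq {Φ : ℕ → ℝ} (hΦ : ∀ t, 0 ≤ Φ t)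
    (hs : Summable fun t => Φ t ^ 2) :
    Tendsto (fun k : ℕ => √k * sInf (Φ '' Icc 1 k)) atTop (𝓝 0) := by
  set tail : ℕ → ℝ := fun j => ∑' i, Φ (i + j) ^ 2
  have htail : Tendsto (fun k : ℕ => √(2 * tail (k / 2 + 1))) atTop (𝓝 0) := by
    have hk : Tendsto (fun k : ℕ => k / 2 + 1) atTop atTop :=
      tendsto_atTop_atTop.2 fun j => ⟨2 * j, fun k hk => by omega⟩
    simpa using (((tendsto_sum_nat_add fun t => Φ t ^ 2).comp hk).const_mul 2).sqrt
  have hinf_nonneg : ∀ k, 0 ≤ sInf (Φ '' Icc 1 k) := fun k =>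
    Real.sInf_nonneg (by rintro _ ⟨t, _, rfl⟩; exact hΦ t)
  refine squeeze_zero (fun k => mul_nonneg (Real.sqrt_nonneg _) (hinf_nonneg k)) (fun k => ?_) htail
  rcases Nat.eq_zero_or_pos k with rfl | hk
  · simp
  set s := Finset.Ico (k / 2 + 1) (k + 1)
  obtain ⟨t, hts, htmin⟩ := s.exists_min_image (fun t => Φ t ^ 2) (Finset.nonempty_Ico.2 (by omega))
  have hcard : (k : ℝ) ≤ 2 * s.card := by rw [Nat.card_Ico]; norm_cast; omega
  have hsum : s.card * Φ t ^ 2 ≤ tail (k / 2 + 1) := by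
    calc s.card * Φ t ^ 2 ≤ ∑ i ∈ s, Φ i ^ 2 := by
          simpa using s.card_nsmul_le_sum (fun i => Φ i ^ 2) _ htmin
      _ = ∑ i ∈ Finset.range (k - k / 2), Φ (i + (k / 2 + 1)) ^ 2 := by
          rw [Finset.sum_Ico_eq_sum_range, show k + 1 - (k / 2 + 1) = k - k / 2 by omega]
          simp only [add_comm]
      _ ≤ tail (k / 2 + 1) :=
          ((summable_nat_add_iff _).2 hs).sum_le_tsum _ fun i _ => sq_nonneg _
  have ht : t ∈ Icc 1 k := by
    have := Finset.mem_Ico.1 hts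
    exact ⟨by omega, by omega⟩
  calc √k * sInf (Φ '' Icc 1 k) ≤ √k * Φ t :=
        mul_le_mul_of_nonneg_left (csInf_le ⟨0, by rintro _ ⟨t, _, rfl⟩; exact hΦ t⟩
          (mem_image_of_mem Φ ht)) (Real.sqrt_nonneg _)
    _ = √(k * Φ t ^ 2) := by rw [Real.sqrt_mul (Nat.cast_nonneg k), Real.sqrt_sq (hΦ t)]
    _ ≤ √(2 * tail (k / 2 + 1)) :=
        Real.sqrt_le_sqrt (by nlinarith [sq_nonneg (Φ t), Real.sqrt_nonneg (Φ t)])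

theorem meal_summable_sq_sub (hγ : 0 < γ) (hη0 : 0 < η) (hη2 : η < 2) (hLf : 0 < Lf)
    (hβ : 0 < β) (hσ : 0 < σ) {α B : ℝ}
    (hwc : ConvexOn ℝ univ fun x => f x + ρ / 2 * ‖x‖ ^ 2)
    (hlip : ∀ w w', ‖γ⁻¹ • (w - prox w) - γ⁻¹ • (w' - prox w')‖ ≤ Lf * ‖prox w - prox w'‖)
    (hb : b ∈ LinearMap.range (Matrix.toEuclideanLin A))
    (hσA : ∀ v ∈ LinearMap.range (Matrix.toEuclideanLin A),
      σ * ‖v‖ ^ 2 ≤ ‖Matrix.toEuclideanLin A.transpose v‖ ^ 2)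
    (hαdef : α = (2 * β + γ * η * (1 - η / 2)) / (2 * (γ ^ 2 * σ) * β ^ 2))
    (hα : α < min ((1 - γ * ρ) / (4 * γ * (1 + γ * Lf) ^ 2)) (1 / (8 * γ) * (2 / η - 1)))
    (hxmin : ∀ k x', Pfun f A b γ β (x (k + 1)) (z k) (lam k)
        ≤ Pfun f A b γ β x' (z k) (lam k))
    (hz : ∀ k, z (k + 1) = z k - η • (z k - x (k + 1)))
    (hlam : ∀ k, lam (k + 1) = lam k + β • (Matrix.toEuclideanLin A (x (k + 1)) - b))
    (hprox : ∀ k, x (k + 1) = prox (z k - γ • Matrix.toEuclideanLin A.transpose (lam (k + 1))))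
    (hB : ∀ k, 1 ≤ k →
      B ≤ Pfun f A b γ β (x k) (z k) (lam k) + 2 * α * ‖z k - z (k - 1)‖ ^ 2) :
    (Summable fun k => ‖z (k + 1) - z k‖ ^ 2) ∧ Summable fun k => ‖x (k + 2) - x (k + 1)‖ ^ 2 := by
  obtain ⟨hα₁, hd, he⟩ := meal_descent_coeffs_pos hγ hη0 hη2 hLf hβ hσ hαdef hα
  set d := (2 - η) / (2 * γ * η) - 2 * α with hd_def
  set e := 1 / (2 * γ) - ρ / 2 - 2 * (1 + γ * Lf) ^ 2 / (γ ^ 2 * σ * β) with he_def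
  have hdesc := meal_descent hγ hβ hσ hwc hlip hb hσA hxmin hz hlam hprox
  have hsum : Summable fun k => d * ‖z (k + 2) - z (k + 1)‖ ^ 2 + e * ‖x (k + 2) - x (k + 1)‖ ^ 2 :=
    summable_of_add_le_of_forall_le
      (F := fun k => Pfun f A b γ β (x (k + 1)) (z (k + 1)) (lam (k + 1))
        + 2 * α * ‖z (k + 1) - z k‖ ^ 2)
      (fun k => by simpa using hB (k + 1) le_add_self) (fun k => by positivity)
      fun k => by
        rw [show k + 1 + 1 = k + 2 from rfl]
        linear_combination hdesc k + mul_le_mul_of_nonneg_right hα₁ (sq_nonneg ‖z (k + 1) - z k‖)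
          + ‖z (k + 2) - z (k + 1)‖ ^ 2 * hd_def + ‖x (k + 2) - x (k + 1)‖ ^ 2 * he_def
  constructor
  · refine (summable_nat_add_iff 1).1 ((hsum.div_const d).of_nonneg_of_le (fun _ => sq_nonneg _)
      fun k => ?_)
    rw [le_div_iff₀ hd]
    nlinarith [sq_nonneg ‖x (k + 2) - x (k + 1)‖]
  · refine (hsum.div_const e).of_nonneg_of_le (fun _ => sq_nonneg _) fun k => ?_
    rw [le_div_iff₀ he]
    nlinarith [sq_nonneg ‖z (k + 2) - z (k + 1)‖]

theorem meal_summable_residual_sq (hγ : 0 < γ) (hη0 : 0 < η) (hη2 : η < 2) (hLf : 0 < Lf)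
    (hβ : 0 < β) (hσ : 0 < σ) {α B : ℝ}
    (hwc : ConvexOn ℝ univ fun x => f x + ρ / 2 * ‖x‖ ^ 2)
    (hlip : ∀ w w', ‖γ⁻¹ • (w - prox w) - γ⁻¹ • (w' - prox w')‖ ≤ Lf * ‖prox w - prox w'‖)
    (hb : b ∈ LinearMap.range (Matrix.toEuclideanLin A))
    (hσA : ∀ v ∈ LinearMap.range (Matrix.toEuclideanLin A),
      σ * ‖v‖ ^ 2 ≤ ‖Matrix.toEuclideanLin A.transpose v‖ ^ 2)
    (hαdef : α = (2 * β + γ * η * (1 - η / 2)) / (2 * (γ ^ 2 * σ) * β ^ 2))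
    (hα : α < min ((1 - γ * ρ) / (4 * γ * (1 + γ * Lf) ^ 2)) (1 / (8 * γ) * (2 / η - 1)))
    (hxmin : ∀ k x', Pfun f A b γ β (x (k + 1)) (z k) (lam k)
        ≤ Pfun f A b γ β x' (z k) (lam k))
    (hz : ∀ k, z (k + 1) = z k - η • (z k - x (k + 1)))
    (hlam : ∀ k, lam (k + 1) = lam k + β • (Matrix.toEuclideanLin A (x (k + 1)) - b))
    (hprox : ∀ k, x (k + 1) = prox (z k - γ • Matrix.toEuclideanLin A.transpose (lam (k + 1))))
    (hB : ∀ k, 1 ≤ k →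
      B ≤ Pfun f A b γ β (x k) (z k) (lam k) + 2 * α * ‖z k - z (k - 1)‖ ^ 2) :
    Summable fun t => ((η * γ) ^ 2)⁻¹ * ‖z t - z (t + 1)‖ ^ 2
      + (β ^ 2)⁻¹ * ‖lam (t + 1) - lam t‖ ^ 2 := by
  obtain ⟨hΔz, hΔx⟩ :=
    meal_summable_sq_sub hγ hη0 hη2 hLf hβ hσ hwc hlip hb hσA hαdef hα hxmin hz hlam hprox hB
  refine (summable_nat_add_iff 1).1 ((((summable_nat_add_iff 1).2 hΔz).mul_left ((η * γ) ^ 2)⁻¹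
    |>.add (((hΔz.mul_left 2).add (hΔx.mul_left (2 * (1 + γ * Lf) ^ 2))).div_const (γ ^ 2 * σ)
      |>.mul_left (β ^ 2)⁻¹)).of_nonneg_of_le (fun _ => by positivity) fun k => ?_)
  rw [norm_sub_rev (z (k + 1))]
  gcongr _ + _ * ?_
  rw [le_div_iff₀ (by positivity), mul_comm]
  exact meal_multiplier_step_le hγ hlip hb hσA hlam hprox k

end MEAL

theorem stmt_11_general (n m : ℕ) (A : Matrix (Fin m) (Fin n) ℝ) (b : EuclideanSpace ℝ (Fin m))
    (f : EuclideanSpace ℝ (Fin n) → ℝ) (ρ γ η Lf β σ α : ℝ)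
    (hγ0 : 0 < γ) (hη0 : 0 < η) (hη2 : η < 2)
    (hLf : 0 < Lf) (hβ : 0 < β) (hσ : 0 < σ)
    (hwc : ConvexOn ℝ Set.univ fun x => f x + ρ / 2 * ‖x‖ ^ 2)
    (prox : EuclideanSpace ℝ (Fin n) → EuclideanSpace ℝ (Fin n))
    (hlip : ∀ w w', ‖γ⁻¹ • (w - prox w) - γ⁻¹ • (w' - prox w')‖
        ≤ Lf * ‖prox w - prox w'‖)
    (hb : b ∈ LinearMap.range (Matrix.toEuclideanLin A))
    (hσA : ∀ v ∈ LinearMap.range (Matrix.toEuclideanLin A),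
      σ * ‖v‖ ^ 2 ≤ ‖Matrix.toEuclideanLin A.transpose v‖ ^ 2)
    (hαdef : α = (2 * β + γ * η * (1 - η / 2)) / (2 * (γ ^ 2 * σ) * β ^ 2))
    (hα : α < min ((1 - γ * ρ) / (4 * γ * (1 + γ * Lf) ^ 2)) (1 / (8 * γ) * (2 / η - 1)))
    (x z : ℕ → EuclideanSpace ℝ (Fin n)) (lam : ℕ → EuclideanSpace ℝ (Fin m))
    (hxmin : ∀ k x', Pfun f A b γ β (x (k + 1)) (z k) (lam k)
        ≤ Pfun f A b γ β x' (z k) (lam k))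
    (hz : ∀ k, z (k + 1) = z k - η • (z k - x (k + 1)))
    (hlam : ∀ k, lam (k + 1) = lam k + β • (Matrix.toEuclideanLin A (x (k + 1)) - b))
    (hprox : ∀ k, x (k + 1) = prox (z k - γ • Matrix.toEuclideanLin A.transpose (lam (k + 1))))
    (B : ℝ)
    (hB : ∀ k, 1 ≤ k →
      B ≤ Pfun f A b γ β (x k) (z k) (lam k) + 2 * α * ‖z k - z (k - 1)‖ ^ 2) :
    Filter.Tendsto (fun k : ℕ => Real.sqrt k *
        sInf ((fun t => Real.sqrt (((η * γ) ^ 2)⁻¹ * ‖z t - z (t + 1)‖ ^ 2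
            + (β ^ 2)⁻¹ * ‖lam (t + 1) - lam t‖ ^ 2)) '' Set.Icc 1 k))
      Filter.atTop (nhds 0) :=
  tendsto_sqrt_mul_sInf_image_Icc_of_summable_sq (fun _ => Real.sqrt_nonneg _)
    ((meal_summable_residual_sq hγ0 hη0 hη2 hLf hβ hσ hwc hlip hb hσA hαdef hα hxmin hz hlam
      hprox hB).congr fun _ => (Real.sq_sqrt (by positivity)).symm)

/-- Theorem 1(a): iteration complexity `o(1/√k)` of MEAL under the implicit Lipschitz
subgradient assumption. -/
theorem stmt_11 (n m : ℕ) (A : Matrix (Fin m) (Fin n) ℝ) (b : EuclideanSpace ℝ (Fin m))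
    (f : EuclideanSpace ℝ (Fin n) → ℝ) (ρ γ η Lf β σ α : ℝ)
    (hρ : 0 < ρ) (hγ0 : 0 < γ) (hγ : γ < 1 / ρ) (hη0 : 0 < η) (hη2 : η < 2)
    (hLf : 0 < Lf) (hβ : 0 < β) (hσ : 0 < σ)
    (hlsc : LowerSemicontinuous f)
    (hwc : ConvexOn ℝ Set.univ fun x => f x + ρ / 2 * ‖x‖ ^ 2)
    (prox : EuclideanSpace ℝ (Fin n) → EuclideanSpace ℝ (Fin n))
    (hproxmin : ∀ w x, f (prox w) + 1 / (2 * γ) * ‖prox w - w‖ ^ 2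
        ≤ f x + 1 / (2 * γ) * ‖x - w‖ ^ 2)
    (hproxuniq : ∀ w x, (∀ y, f x + 1 / (2 * γ) * ‖x - w‖ ^ 2
        ≤ f y + 1 / (2 * γ) * ‖y - w‖ ^ 2) → x = prox w)
    (hlip : ∀ w w', ‖γ⁻¹ • (w - prox w) - γ⁻¹ • (w' - prox w')‖
        ≤ Lf * ‖prox w - prox w'‖)
    (hb : b ∈ LinearMap.range (Matrix.toEuclideanLin A))
    (hσA : ∀ v ∈ LinearMap.range (Matrix.toEuclideanLin A),
      σ * ‖v‖ ^ 2 ≤ ‖Matrix.toEuclideanLin A.transpose v‖ ^ 2)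
    (hαdef : α = (2 * β + γ * η * (1 - η / 2)) / (2 * (γ ^ 2 * σ) * β ^ 2))
    (hα : α < min ((1 - γ * ρ) / (4 * γ * (1 + γ * Lf) ^ 2)) (1 / (8 * γ) * (2 / η - 1)))
    (x z : ℕ → EuclideanSpace ℝ (Fin n)) (lam : ℕ → EuclideanSpace ℝ (Fin m))
    (hxmin : ∀ k x', Pfun f A b γ β (x (k + 1)) (z k) (lam k)
        ≤ Pfun f A b γ β x' (z k) (lam k))
    (hz : ∀ k, z (k + 1) = z k - η • (z k - x (k + 1)))
    (hlam : ∀ k, lam (k + 1) = lam k + β • (Matrix.toEuclideanLin A (x (k + 1)) - b))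
    (hprox : ∀ k, x (k + 1) = prox (z k - γ • Matrix.toEuclideanLin A.transpose (lam (k + 1))))
    (B : ℝ)
    (hB : ∀ k, 1 ≤ k →
      B ≤ Pfun f A b γ β (x k) (z k) (lam k) + 2 * α * ‖z k - z (k - 1)‖ ^ 2) :
    Filter.Tendsto (fun k : ℕ => Real.sqrt k *
        sInf ((fun t => Real.sqrt (((η * γ) ^ 2)⁻¹ * ‖z t - z (t + 1)‖ ^ 2
            + (β ^ 2)⁻¹ * ‖lam (t + 1) - lam t‖ ^ 2)) '' Set.Icc 1 k))
      Filter.atTop (nhds 0) :=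
  stmt_11_general n m A b f ρ γ η Lf β σ α hγ0 hη0 hη2 hLf hβ hσ hwc prox hlip hb hσA hαdef hα x z
    lam hxmin hz hlam hprox B hB
end

section
/- Let f : ℝ^n → ℝ be lower semicontinuous and ρ-weakly convex with the implicit Lipschitz subgradient property with constant L_f > 0, let γ ∈ (0, 1/ρ), η ∈ (0, 2), and let β > 0 be a fixed penalty parameter. Assume b lies in the column space of A and σ̃ > 0 satisfies ‖Aᵀv‖² ≥ σ̃‖v‖² for every v in the column space of A; set c_{γ,A} := γ²σ̃ and α := (2β + γη(1 − η/2))/(2c_{γ,A}β²), and assume α < min{ (1 − γρ)/(6γ(1 + γL_f)²), (1/(12γ))(2/η − 1) }. Let (x^k, z^k, λ^k, s^k) be iMEAL iterates with constant penalty β_k = β, step size η, and accuracies ε_k ≥ 0 satisfying Σ_{k=0}^∞ ε_k² < ∞, and suppose the sequence E^k := P_β(x^k, z^k, λ^k) + 3α‖z^k − z^{k−1}‖² (k ≥ 1) is bounded below. Then √k · (min_{1≤t≤k} Φ_t) → 0 as k → ∞, where Φ_t := √((ηγ)⁻²‖z^t − z^{t+1}‖² + β⁻²‖λ^{t+1}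 − λ^t‖²). -/
open scoped RealInnerProductSpace
open Filter Topology

theorem exists_mem_Icc_mul_le_two_mul_tsum {a : ℕ → ℝ} (ha : ∀ t, 0 ≤ a t) (hsum : Summable a)
    {k : ℕ} (hk : 1 ≤ k) : ∃ t ∈ Set.Icc 1 k, k * a t ≤ 2 * ∑' i, a (i + (k + 1) / 2) := by
  -- the minimum over the upper half `[j, k]` is at most the average there
  set j := (k + 1) / 2
  obtain ⟨t, ht, hmin⟩ :=
    (Finset.Icc j k).exists_min_image a ⟨j, Finset.mem_Icc.mpr ⟨le_rfl, by omega⟩⟩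
  have hjt := Finset.mem_Icc.mp ht
  refine ⟨t, ⟨by omega, hjt.2⟩, ?_⟩
  have hcard : ((k + 1 - j : ℕ) : ℝ) * a t ≤ ∑ i ∈ Finset.Icc j k, a i := by
    simpa [Nat.card_Icc] using Finset.card_nsmul_le_sum _ a (a t) hmin
  have htail : ∑ i ∈ Finset.Icc j k, a i ≤ ∑' i, a (i + j) := by
    rw [← Finset.Ico_add_one_right_eq_Icc, Finset.sum_Ico_eq_sum_range]
    simp only [add_comm j]
    exact ((summable_nat_add_iff j).mpr hsum).sum_le_tsum _ fun i _ => ha _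
  have hkj : (k : ℝ) ≤ 2 * ((k + 1 - j : ℕ) : ℝ) := by
    exact_mod_cast (by omega : k ≤ 2 * (k + 1 - j))
  nlinarith [ha t]

theorem tendsto_sqrt_mul_sInf_sqrt_of_summable {a : ℕ → ℝ} (ha : ∀ t, 0 ≤ a t)
    (hsum : Summable a) :
    Tendsto (fun k : ℕ => √(k : ℝ) * sInf ((fun t => √(a t)) '' Set.Icc 1 k)) atTop (𝓝 0) := by
  have htail : Tendsto (fun k : ℕ => √(2 * ∑' i, a (i + (k + 1) / 2))) atTop (𝓝 0) := by
    have hj : Tendsto (fun k : ℕ => (k + 1) / 2) atTop atTop :=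
      (Nat.tendsto_div_const_atTop two_ne_zero).comp (tendsto_add_atTop_nat 1)
    simpa using (((tendsto_sum_nat_add a).comp hj).const_mul 2).sqrt
  refine squeeze_zero' (Eventually.of_forall fun k => ?_) ?_ htail
  · refine mul_nonneg (Real.sqrt_nonneg _) (Real.sInf_nonneg ?_)
    rintro _ ⟨t, -, rfl⟩
    exact Real.sqrt_nonneg _
  filter_upwards [eventually_ge_atTop 1] with k hk
  obtain ⟨t, ht, hkt⟩ := exists_mem_Icc_mul_le_two_mul_tsum ha hsum hk
  calc √(k : ℝ) * sInf ((fun t => √(a t)) '' Set.Icc 1 k)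
      ≤ √(k : ℝ) * √(a t) := by
        gcongr
        exact csInf_le ((Set.finite_Icc 1 k).image _).bddBelow ⟨t, ht, rfl⟩
    _ = √(k * a t) := (Real.sqrt_mul (Nat.cast_nonneg k) _).symm
    _ ≤ _ := Real.sqrt_le_sqrt hkt

theorem summable_of_add_le_of_forall_le_s13 {E g e : ℕ → ℝ} {B : ℝ} (hB : ∀ k, B ≤ E k)
    (hg : ∀ k, 0 ≤ g k) (he : ∀ k, 0 ≤ e k) (hsum : Summable e)
    (hdesc : ∀ k, E (k + 1) + g k ≤ E k + e k) : Summable g := by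
  refine summable_of_sum_range_le hg (c := E 0 - B + ∑' k, e k) fun K => ?_
  have htel : E K + ∑ i ∈ Finset.range K, g i ≤ E 0 + ∑ i ∈ Finset.range K, e i := by
    induction K with
    | zero => simp
    | succ K ih => rw [Finset.sum_range_succ, Finset.sum_range_succ]; linarith [hdesc K]
  linarith [hB K, hsum.sum_le_tsum (Finset.range K) fun i _ => he i]

theorem summable_of_summable_mul_add_mul {f g : ℕ → ℝ} {a c : ℝ} (ha : 0 < a) (hc : 0 < c)
    (hf : ∀ k, 0 ≤ f k) (hg : ∀ k, 0 ≤ g k) (h : Summable fun k => a * f k + c * g k) :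
    Summable f ∧ Summable g :=
  ⟨(summable_mul_left_iff ha.ne').1 <| h.of_nonneg_of_le (fun k => mul_nonneg ha.le (hf k))
      fun k => le_add_of_nonneg_right (mul_nonneg hc.le (hg k)),
    (summable_mul_left_iff hc.ne').1 <| h.of_nonneg_of_le (fun k => mul_nonneg hc.le (hg k))
      fun k => le_add_of_nonneg_left (mul_nonneg ha.le (hf k))⟩

section Parameters

variable {ρ γ η L β σ α : ℝ}

theorem one_div_le_of_eq_div (hγ : 0 < γ) (hη0 : 0 < η) (hη2 : η < 2) (hβ : 0 < β) (hσ : 0 < σ)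
    (hα : α = (2 * β + γ * η * (1 - η / 2)) / (2 * (γ ^ 2 * σ) * β ^ 2)) :
    1 / (γ ^ 2 * σ * β) ≤ α := by
  have h : 0 ≤ γ * η * (1 - η / 2) := mul_nonneg (mul_pos hγ hη0).le (by linarith)
  rw [hα, div_le_div_iff₀ (by positivity) (by positivity)]
  nlinarith [mul_nonneg h (by positivity : 0 ≤ γ ^ 2 * σ * β)]

theorem three_mul_mul_sq_lt_of_lt_div (hγ : 0 < γ) (hL : 0 < L)
    (hα : α < (1 - γ * ρ) / (6 * γ * (1 + γ * L) ^ 2)) :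
    3 * α * (1 + γ * L) ^ 2 < (γ⁻¹ - ρ) / 2 := by
  rw [lt_div_iff₀ (by positivity)] at hα
  have h : (γ⁻¹ - ρ) / 2 = (1 - γ * ρ) / (2 * γ) := by field_simp
  rw [h, lt_div_iff₀ (by positivity)]
  linarith

theorem six_mul_lt_of_lt_mul_div (hγ : 0 < γ) (hη : 0 < η)
    (hα : α < 1 / (12 * γ) * (2 / η - 1)) : 6 * α < (2 - η) / (2 * γ * η) := by
  have h : 1 / (12 * γ) * (2 / η - 1) = (2 - η) / (2 * γ * η) / 6 := by field_simp; ring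
  rw [h] at hα
  linarith

end Parameters

theorem norm_sub_le_of_eq_prox {E : Type*} [NormedAddCommGroup E] [NormedSpace ℝ E]
    (prox : E → E) {γ L : ℝ} (hγ : 0 < γ)
    (hlip : ∀ w w', ‖γ⁻¹ • (w - prox w) - γ⁻¹ • (w' - prox w')‖ ≤ L * ‖prox w - prox w'‖)
    {x x' z z' v v' s s' : E} (hx : x = prox (z - γ • (v - s)))
    (hx' : x' = prox (z' - γ • (v' - s'))) :
    ‖v - v'‖ ≤ γ⁻¹ * ‖z - z'‖ + (γ⁻¹ + L) * ‖x - x'‖ + ‖s‖ + ‖s'‖ := by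
  -- `γ⁻¹ (w − prox w)` at `w = z − γ (v − s)`, i.e. the Moreau gradient, expressed through `v`
  have hgrad : ∀ x z v s : E, γ⁻¹ • (z - γ • (v - s) - x) = γ⁻¹ • (z - x) - v + s := by
    intro x z v s
    match_scalars <;> field_simp
  have h := hlip (z - γ • (v - s)) (z' - γ • (v' - s'))
  rw [← hx, ← hx', hgrad, hgrad] at h
  have hv : v - v' = γ⁻¹ • (z - z') - γ⁻¹ • (x - x') + (s - s')
      - ((γ⁻¹ • (z - x) - v + s) - (γ⁻¹ • (z' - x') - v' + s')) := by module
  calc ‖v - v'‖ ≤ ‖γ⁻¹ • (z - z')‖ + ‖γ⁻¹ • (x - x')‖ + (‖s‖ + ‖s'‖) + L * ‖x - x'‖ := by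
        rw [hv]
        refine (norm_sub_le _ _).trans (add_le_add ?_ h)
        refine (norm_add_le _ _).trans (add_le_add (norm_sub_le _ _) (norm_sub_le _ _))
    _ = γ⁻¹ * ‖z - z'‖ + (γ⁻¹ + L) * ‖x - x'‖ + ‖s‖ + ‖s'‖ := by
        rw [norm_smul, norm_smul, Real.norm_of_nonneg (inv_nonneg.2 hγ.le)]
        ring

theorem Pfun_update_center_multiplier {n m : ℕ} (f : EuclideanSpace ℝ (Fin n) → ℝ)
    (A : Matrix (Fin m) (Fin n) ℝ) (b : EuclideanSpace ℝ (Fin m)) (γ β η : ℝ)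
    (x z : EuclideanSpace ℝ (Fin n)) (lam : EuclideanSpace ℝ (Fin m)) :
    Pfun f A b γ β x (z - η • (z - x)) (lam + β • (Matrix.toEuclideanLin A x - b))
      = Pfun f A b γ β x z lam + β * ‖Matrix.toEuclideanLin A x - b‖ ^ 2
        - (2 - η) * η / (2 * γ) * ‖z - x‖ ^ 2 := by
  have hx : x - (z - η • (z - x)) = (1 - η) • (x - z) := by module
  simp only [Pfun, hx, inner_add_left, real_inner_smul_left, real_inner_self_eq_norm_sq,
    norm_smul, Real.norm_eq_abs, mul_pow, sq_abs, norm_sub_rev z x]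
  ring

section IMEAL

variable {n m : ℕ} {f : EuclideanSpace ℝ (Fin n) → ℝ} {A : Matrix (Fin m) (Fin n) ℝ}
  {b : EuclideanSpace ℝ (Fin m)} {prox : EuclideanSpace ℝ (Fin n) → EuclideanSpace ℝ (Fin n)}
  {ρ γ η L β σ α : ℝ} {ε : ℕ → ℝ} {x z s : ℕ → EuclideanSpace ℝ (Fin n)}
  {lam : ℕ → EuclideanSpace ℝ (Fin m)}

theorem sq_norm_lam_sub_le (hγ : 0 < γ)
    (hlip : ∀ w w', ‖γ⁻¹ • (w - prox w) - γ⁻¹ • (w' - prox w')‖ ≤ L * ‖prox w - prox w'‖)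
    (hb : b ∈ LinearMap.range (Matrix.toEuclideanLin A))
    (hσA : ∀ v ∈ LinearMap.range (Matrix.toEuclideanLin A),
      σ * ‖v‖ ^ 2 ≤ ‖Matrix.toEuclideanLin A.transpose v‖ ^ 2)
    (hs : ∀ k, ‖s k‖ ≤ ε k)
    (hprox : ∀ k, x (k + 1)
        = prox (z k - γ • (Matrix.toEuclideanLin A.transpose (lam (k + 1)) - s k)))
    (hlam : ∀ k, lam (k + 1) = lam k + β • (Matrix.toEuclideanLin A (x (k + 1)) - b)) (k : ℕ) :
    σ * ‖lam (k + 2) - lam (k + 1)‖ ^ 2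
      ≤ 3 * γ⁻¹ ^ 2 * ‖z k - z (k + 1)‖ ^ 2 + 3 * (γ⁻¹ + L) ^ 2 * ‖x (k + 2) - x (k + 1)‖ ^ 2
        + 6 * ε (k + 1) ^ 2 + 6 * ε k ^ 2 := by
  have hrange : lam (k + 2) - lam (k + 1) ∈ LinearMap.range (Matrix.toEuclideanLin A) := by
    rw [hlam (k + 1), add_sub_cancel_left]
    exact Submodule.smul_mem _ _ (Submodule.sub_mem _ (LinearMap.mem_range_self _ _) hb)
  have hT := norm_sub_le_of_eq_prox prox hγ hlip (hprox (k + 1)) (hprox k)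
  rw [← map_sub, norm_sub_rev (z (k + 1))] at hT
  set a := γ⁻¹ * ‖z k - z (k + 1)‖
  set c := (γ⁻¹ + L) * ‖x (k + 2) - x (k + 1)‖
  calc σ * ‖lam (k + 2) - lam (k + 1)‖ ^ 2
      ≤ ‖Matrix.toEuclideanLin A.transpose (lam (k + 2) - lam (k + 1))‖ ^ 2 := hσA _ hrange
    _ ≤ (a + c + ε (k + 1) + ε k) ^ 2 := by
        gcongr
        linarith [hs k, hs (k + 1)]
    _ ≤ 3 * a ^ 2 + 3 * c ^ 2 + 6 * ε (k + 1) ^ 2 + 6 * ε k ^ 2 := by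
        nlinarith [sq_nonneg (a - c), sq_nonneg (a - ε (k + 1) - ε k),
          sq_nonneg (c - ε (k + 1) - ε k), sq_nonneg (ε (k + 1) - ε k)]
    _ = _ := by ring

theorem lyapunov_descent {a₁ a₂ : ℝ} (hγ : 0 < γ) (hη : 0 < η) (hβ : 0 < β) (hσ : 0 < σ)
    (hα : 1 / (γ ^ 2 * σ * β) ≤ α) (ha₁ : 0 < a₁)
    (ha₁α : a₁ + 3 * α * (1 + γ * L) ^ 2 ≤ (γ⁻¹ - ρ) / 2)
    (ha₂α : a₂ + 6 * α ≤ (2 - η) / (2 * γ * η))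
    (hs : ∀ k, ‖s k‖ ≤ ε k)
    (hxdesc : ∀ k, Pfun f A b γ β (x k) (z k) (lam k)
        ≥ Pfun f A b γ β (x (k + 1)) (z k) (lam k)
          + ⟪s k, x k - x (k + 1)⟫ + (γ⁻¹ - ρ) / 2 * ‖x (k + 1) - x k‖ ^ 2)
    (hz : ∀ k, z (k + 1) = z k - η • (z k - x (k + 1)))
    (hlam : ∀ k, lam (k + 1) = lam k + β • (Matrix.toEuclideanLin A (x (k + 1)) - b))
    (hdual : ∀ k, σ * ‖lam (k + 2) - lam (k + 1)‖ ^ 2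
      ≤ 3 * γ⁻¹ ^ 2 * ‖z k - z (k + 1)‖ ^ 2 + 3 * (γ⁻¹ + L) ^ 2 * ‖x (k + 2) - x (k + 1)‖ ^ 2
        + 6 * ε (k + 1) ^ 2 + 6 * ε k ^ 2) (k : ℕ) :
    Pfun f A b γ β (x (k + 2)) (z (k + 2)) (lam (k + 2)) + 3 * α * ‖z (k + 1) - z (k + 2)‖ ^ 2
        + (a₁ / 2 * ‖x (k + 2) - x (k + 1)‖ ^ 2 + a₂ * ‖z (k + 1) - z (k + 2)‖ ^ 2)
      ≤ Pfun f A b γ β (x (k + 1)) (z (k + 1)) (lam (k + 1)) + 3 * α * ‖z k - z (k + 1)‖ ^ 2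
        + (6 / (σ * β) + 1 / (2 * a₁)) * (ε (k + 1) ^ 2 + ε k ^ 2) := by
  set u := ‖x (k + 2) - x (k + 1)‖
  set r := ‖Matrix.toEuclideanLin A (x (k + 2)) - b‖
  have hP := Pfun_update_center_multiplier f A b γ β η (x (k + 2)) (z (k + 1)) (lam (k + 1))
  rw [← hz (k + 1), ← hlam (k + 1)] at hP
  have hD : ‖z (k + 1) - z (k + 2)‖ = η * ‖z (k + 1) - x (k + 2)‖ := by
    rw [hz (k + 1), sub_sub_cancel, norm_smul, Real.norm_of_nonneg hη.le]
  have hd : ‖lam (k + 2) - lam (k + 1)‖ = β * r := by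
    rw [hlam (k + 1), add_sub_cancel_left, norm_smul, Real.norm_of_nonneg hβ.le]
  have hinner : -(ε (k + 1) * u) ≤ ⟪s (k + 1), x (k + 1) - x (k + 2)⟫ := by
    refine neg_le_of_abs_le ((abs_real_inner_le_norm _ _).trans ?_)
    rw [norm_sub_rev]
    exact mul_le_mul_of_nonneg_right (hs _) (norm_nonneg _)
  have hyoung : ε (k + 1) * u ≤ a₁ / 2 * u ^ 2 + 1 / (2 * a₁) * ε (k + 1) ^ 2 := by
    have := sq_nonneg (a₁ * u - ε (k + 1))
    field_simp
    nlinarith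
  have hpen : β * r ^ 2 ≤ 3 * α * ‖z k - z (k + 1)‖ ^ 2 + 3 * α * (1 + γ * L) ^ 2 * u ^ 2
      + 6 / (σ * β) * (ε (k + 1) ^ 2 + ε k ^ 2) := by
    have hscaled : β * r ^ 2 ≤ 1 / (γ ^ 2 * σ * β) * (3 * ‖z k - z (k + 1)‖ ^ 2
        + 3 * (1 + γ * L) ^ 2 * u ^ 2) + 6 / (σ * β) * (ε (k + 1) ^ 2 + ε k ^ 2) := by
      rw [← mul_le_mul_iff_of_pos_left (mul_pos hσ hβ)]
      have h := hdual k
      rw [hd] at h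
      field_simp
      field_simp at h
      linarith
    have := mul_le_mul_of_nonneg_right hα
      (by positivity : 0 ≤ 3 * ‖z k - z (k + 1)‖ ^ 2 + 3 * (1 + γ * L) ^ 2 * u ^ 2)
    linarith
  have hcenter : (a₂ + 6 * α) * ‖z (k + 1) - z (k + 2)‖ ^ 2
      ≤ (2 - η) * η / (2 * γ) * ‖z (k + 1) - x (k + 2)‖ ^ 2 := by
    rw [hD]
    calc (a₂ + 6 * α) * (η * ‖z (k + 1) - x (k + 2)‖) ^ 2
        ≤ (2 - η) / (2 * γ * η) * (η * ‖z (k + 1) - x (k + 2)‖) ^ 2 := by gcongr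
      _ = _ := by field_simp
  have hα₀ : 0 ≤ α := le_trans (by positivity) hα
  have hprimal := mul_le_mul_of_nonneg_right ha₁α (sq_nonneg u)
  have hxk := hxdesc (k + 1)
  linarith [mul_nonneg hα₀ (sq_nonneg ‖z (k + 1) - z (k + 2)‖),
    (by positivity : 0 ≤ 1 / (2 * a₁) * ε k ^ 2)]

theorem summable_sq_norm_lam_sub (hσ : 0 < σ)
    (hdual : ∀ k, σ * ‖lam (k + 2) - lam (k + 1)‖ ^ 2
      ≤ 3 * γ⁻¹ ^ 2 * ‖z k - z (k + 1)‖ ^ 2 + 3 * (γ⁻¹ + L) ^ 2 * ‖x (k + 2) - x (k + 1)‖ ^ 2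
        + 6 * ε (k + 1) ^ 2 + 6 * ε k ^ 2)
    (hz : Summable fun k => ‖z k - z (k + 1)‖ ^ 2)
    (hx : Summable fun k => ‖x (k + 2) - x (k + 1)‖ ^ 2) (hε : Summable fun k => ε k ^ 2) :
    Summable fun k => ‖lam (k + 1) - lam k‖ ^ 2 := by
  rw [← summable_nat_add_iff 1]
  refine (summable_mul_left_iff hσ.ne').1
    (Summable.of_nonneg_of_le (fun k => by positivity) hdual ?_)
  exact (((hz.mul_left _).add (hx.mul_left _)).add
    (((summable_nat_add_iff 1).2 hε).mul_left _)).add (hε.mul_left _)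

end IMEAL

theorem stmt_13_general (n m : ℕ) (A : Matrix (Fin m) (Fin n) ℝ) (b : EuclideanSpace ℝ (Fin m))
    (f : EuclideanSpace ℝ (Fin n) → ℝ) (ρ γ η Lf β σ α : ℝ)
    (hγ0 : 0 < γ) (hη0 : 0 < η) (hη2 : η < 2)
    (hLf : 0 < Lf) (hβ : 0 < β) (hσ : 0 < σ)
    (prox : EuclideanSpace ℝ (Fin n) → EuclideanSpace ℝ (Fin n))
    (hlip : ∀ w w', ‖γ⁻¹ • (w - prox w) - γ⁻¹ • (w' - prox w')‖
        ≤ Lf * ‖prox w - prox w'‖)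
    (hb : b ∈ LinearMap.range (Matrix.toEuclideanLin A))
    (hσA : ∀ v ∈ LinearMap.range (Matrix.toEuclideanLin A),
      σ * ‖v‖ ^ 2 ≤ ‖Matrix.toEuclideanLin A.transpose v‖ ^ 2)
    (hαdef : α = (2 * β + γ * η * (1 - η / 2)) / (2 * (γ ^ 2 * σ) * β ^ 2))
    (hα : α < min ((1 - γ * ρ) / (6 * γ * (1 + γ * Lf) ^ 2)) (1 / (12 * γ) * (2 / η - 1)))
    (ε : ℕ → ℝ) (hsum : Summable fun k : ℕ => ε k ^ 2)
    (x z s : ℕ → EuclideanSpace ℝ (Fin n)) (lam : ℕ → EuclideanSpace ℝ (Fin m))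
    (hs : ∀ k, ‖s k‖ ≤ ε k)
    (hprox : ∀ k, x (k + 1)
        = prox (z k - γ • (Matrix.toEuclideanLin A.transpose (lam (k + 1)) - s k)))
    (hxdesc : ∀ k, Pfun f A b γ β (x k) (z k) (lam k)
        ≥ Pfun f A b γ β (x (k + 1)) (z k) (lam k)
          + ⟪s k, x k - x (k + 1)⟫ + (γ⁻¹ - ρ) / 2 * ‖x (k + 1) - x k‖ ^ 2)
    (hz : ∀ k, z (k + 1) = z k - η • (z k - x (k + 1)))
    (hlam : ∀ k, lam (k + 1) = lam k + β • (Matrix.toEuclideanLin A (x (k + 1)) - b))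
    (B : ℝ)
    (hB : ∀ k, 1 ≤ k →
      B ≤ Pfun f A b γ β (x k) (z k) (lam k) + 3 * α * ‖z k - z (k - 1)‖ ^ 2) :
    Filter.Tendsto (fun k : ℕ => Real.sqrt k *
        sInf ((fun t => Real.sqrt (((η * γ) ^ 2)⁻¹ * ‖z t - z (t + 1)‖ ^ 2
            + (β ^ 2)⁻¹ * ‖lam (t + 1) - lam t‖ ^ 2)) '' Set.Icc 1 k))
      Filter.atTop (nhds 0) := by
  have ha₁ := sub_pos.2 (three_mul_mul_sq_lt_of_lt_div hγ0 hLf (hα.trans_le (min_le_left _ _)))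
  have ha₂ := sub_pos.2 (six_mul_lt_of_lt_mul_div hγ0 hη0 (hα.trans_le (min_le_right _ _)))
  have hdual := sq_norm_lam_sub_le hγ0 hlip hb hσA hs hprox hlam
  have hdesc := lyapunov_descent hγ0 hη0 hβ hσ (one_div_le_of_eq_div hγ0 hη0 hη2 hβ hσ hαdef)
    ha₁ (sub_add_cancel _ _).le (sub_add_cancel _ _).le hs hxdesc hz hlam hdual
  -- `E k` is the paper's `E^{k+1}`, shifted to avoid `k - 1` in `ℕ`
  have hg := summable_of_add_le_of_forall_le_s13 (B := B)
    (E := fun k => Pfun f A b γ β (x (k + 1)) (z (k + 1)) (lam (k + 1))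
      + 3 * α * ‖z k - z (k + 1)‖ ^ 2)
    (fun k => by simpa [norm_sub_rev (z k)] using hB (k + 1) k.succ_pos)
    (fun k => by positivity) (fun k => by positivity)
    ((((summable_nat_add_iff 1).2 hsum).add hsum).mul_left _) hdesc
  obtain ⟨hx_sum, hz_sum⟩ := summable_of_summable_mul_add_mul (half_pos ha₁) ha₂
    (fun k => sq_nonneg _) (fun k => sq_nonneg _) hg
  replace hz_sum : Summable fun k => ‖z k - z (k + 1)‖ ^ 2 := (summable_nat_add_iff 1).1 hz_sum
  have hlam_sum := summable_sq_norm_lam_sub hσ hdual hz_sum hx_sum hsum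
  exact tendsto_sqrt_mul_sInf_sqrt_of_summable (fun t => by positivity)
    ((hz_sum.mul_left _).add (hlam_sum.mul_left _))

/-- Theorem 2(a): iteration complexity `o(1/√k)` of iMEAL under the implicit Lipschitz
subgradient assumption. -/
theorem stmt_13 (n m : ℕ) (A : Matrix (Fin m) (Fin n) ℝ) (b : EuclideanSpace ℝ (Fin m))
    (f : EuclideanSpace ℝ (Fin n) → ℝ) (ρ γ η Lf β σ α : ℝ)
    (hρ : 0 < ρ) (hγ0 : 0 < γ) (hγ : γ < 1 / ρ) (hη0 : 0 < η) (hη2 : η < 2)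
    (hLf : 0 < Lf) (hβ : 0 < β) (hσ : 0 < σ)
    (hlsc : LowerSemicontinuous f)
    (hwc : ConvexOn ℝ Set.univ fun x => f x + ρ / 2 * ‖x‖ ^ 2)
    (prox : EuclideanSpace ℝ (Fin n) → EuclideanSpace ℝ (Fin n))
    (hproxmin : ∀ w x, f (prox w) + 1 / (2 * γ) * ‖prox w - w‖ ^ 2
        ≤ f x + 1 / (2 * γ) * ‖x - w‖ ^ 2)
    (hproxuniq : ∀ w x, (∀ y, f x + 1 / (2 * γ) * ‖x - w‖ ^ 2
        ≤ f y + 1 / (2 * γ) * ‖y - w‖ ^ 2) → x = prox w)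
    (hlip : ∀ w w', ‖γ⁻¹ • (w - prox w) - γ⁻¹ • (w' - prox w')‖
        ≤ Lf * ‖prox w - prox w'‖)
    (hb : b ∈ LinearMap.range (Matrix.toEuclideanLin A))
    (hσA : ∀ v ∈ LinearMap.range (Matrix.toEuclideanLin A),
      σ * ‖v‖ ^ 2 ≤ ‖Matrix.toEuclideanLin A.transpose v‖ ^ 2)
    (hαdef : α = (2 * β + γ * η * (1 - η / 2)) / (2 * (γ ^ 2 * σ) * β ^ 2))
    (hα : α < min ((1 - γ * ρ) / (6 * γ * (1 + γ * Lf) ^ 2)) (1 / (12 * γ) * (2 / η - 1)))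
    (ε : ℕ → ℝ) (hε : ∀ k, 0 ≤ ε k) (hsum : Summable fun k : ℕ => ε k ^ 2)
    (x z s : ℕ → EuclideanSpace ℝ (Fin n)) (lam : ℕ → EuclideanSpace ℝ (Fin m))
    (hs : ∀ k, ‖s k‖ ≤ ε k)
    (hprox : ∀ k, x (k + 1)
        = prox (z k - γ • (Matrix.toEuclideanLin A.transpose (lam (k + 1)) - s k)))
    (hxdesc : ∀ k, Pfun f A b γ β (x k) (z k) (lam k)
        ≥ Pfun f A b γ β (x (k + 1)) (z k) (lam k)
          + ⟪s k, x k - x (k + 1)⟫ + (γ⁻¹ - ρ) / 2 * ‖x (k + 1) - x k‖ ^ 2)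
    (hz : ∀ k, z (k + 1) = z k - η • (z k - x (k + 1)))
    (hlam : ∀ k, lam (k + 1) = lam k + β • (Matrix.toEuclideanLin A (x (k + 1)) - b))
    (B : ℝ)
    (hB : ∀ k, 1 ≤ k →
      B ≤ Pfun f A b γ β (x k) (z k) (lam k) + 3 * α * ‖z k - z (k - 1)‖ ^ 2) :
    Filter.Tendsto (fun k : ℕ => Real.sqrt k *
        sInf ((fun t => Real.sqrt (((η * γ) ^ 2)⁻¹ * ‖z t - z (t + 1)‖ ^ 2
            + (β ^ 2)⁻¹ * ‖lam (t + 1) - lam t‖ ^ 2)) '' Set.Icc 1 k))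
      Filter.atTop (nhds 0) :=
  stmt_13_general n m A b f ρ γ η Lf β σ α hγ0 hη0 hη2 hLf hβ hσ prox hlip hb hσA hαdef hα ε hsum x
    z s lam hs hprox hxdesc hz hlam B hB
end
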